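/- arXiv:2103.10758 — 3 statements merged into one kernel-verified Lean document; each statement's English description precedes it below -/
import Mathlib

section
/- Under the block-decomposition setup, the embedding of Ẽ (the completion of H with respect to ‖·‖_i) into E is compact: every sequence (x_p) with sup_p ‖x_p‖_i < ∞ admits a subsequence that converges in the norm of E. -/
/-!
A bounded `‖·‖ᵢ`-sequence has its `k`-th block of norm at most `C 2^{-kα}`, and that block lies
in the finite-dimensional span of `e_{n_k+1}, …, e_{n_{k+1}}`. So every `x_p` is the sum of a
point of the compact product `∏ₖ (Vₖ ∩ closedBall 0 (C 2^{-kα}))`, and summation is continuous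
on that product by the Weierstrass M-test: the `x_p` lie in a compact subset of `E`.
-/

open MeasureTheory ProbabilityTheory Filter Topology NNReal ENNReal

lemma le_max_zero_of_tsum_ofReal_le {ι : Type*} {f : ι → ℝ} {M : ℝ}
    (h : ∑' i, ENNReal.ofReal (f i) ≤ ENNReal.ofReal M) (i : ι) : f i ≤ max M 0 := by
  rcases ENNReal.ofReal_le_ofReal_iff'.mp ((ENNReal.le_tsum i).trans h) with hM | h0
  · exact hM.trans (le_max_left _ _)
  · exact h0.trans (le_max_right _ _)

lemma norm_le_mul_inv_rpow_pow {E : Type*} [SeminormedAddCommGroup E] {α C : ℝ} {v : E}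
    (k : ℕ) (h : (2 : ℝ) ^ ((k : ℝ) * α) * ‖v‖ ≤ C) : ‖v‖ ≤ C * ((2 : ℝ) ^ α)⁻¹ ^ k := by
  have h2 : (2 : ℝ) ^ ((k : ℝ) * α) = ((2 : ℝ) ^ α) ^ k := by
    rw [mul_comm, Real.rpow_mul_natCast zero_le_two]
  rw [h2] at h
  rw [inv_pow, ← div_eq_mul_inv, le_div_iff₀ (by positivity), mul_comm]
  exact h

lemma Submodule.isCompact_inter_closedBall {E : Type*} [NormedAddCommGroup E] [NormedSpace ℝ E]
    (V : Submodule ℝ E) [FiniteDimensional ℝ V] (r : ℝ) :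
    IsCompact ((V : Set E) ∩ Metric.closedBall 0 r) := by
  convert (isCompact_closedBall (0 : V) r).image continuous_subtype_val using 1
  ext v
  constructor
  · rintro ⟨hv, hr⟩
    exact ⟨⟨v, hv⟩, by simpa using hr, rfl⟩
  · rintro ⟨w, hw, rfl⟩
    exact ⟨w.2, by simpa using hw⟩

lemma isCompact_image_tsum_univ_pi {E : Type*} [NormedAddCommGroup E] [CompleteSpace E]
    {B : ℕ → Set E} (hB : ∀ k, IsCompact (B k)) {c : ℕ → ℝ} (hc : Summable c)
    (hBc : ∀ k, ∀ v ∈ B k, ‖v‖ ≤ c k) :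
    IsCompact ((fun z : ℕ → E => ∑' k, z k) '' Set.univ.pi B) :=
  (isCompact_univ_pi hB).image_of_continuousOn <|
    continuousOn_tsum (fun k => (continuous_apply k).continuousOn) hc
      fun k _ hz => hBc k _ (hz k (Set.mem_univ k))

theorem embedding_intermediate_into_E_compact_general
    {E : Type*} [NormedAddCommGroup E] [NormedSpace ℝ E] [CompleteSpace E]
    -- eₙ = E[X gₙ(X)] is the corresponding orthonormal system of the RKHS H
    (e : ℕ → E)
    -- α > 0, and an increasing sequence (nₖ) with n₀ = 0 satisfying the tail bound
    (α : ℝ) (hα : 0 < α) (n : ℕ → ℕ)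
    (a : ℕ → ℕ → ℝ) (x : ℕ → E)
    (hrep : ∀ p, HasSum
      (fun k : ℕ => ∑ j ∈ Finset.Ioc (n k) (n (k + 1)), a p j • e j) (x p))
    (hbdd : ∃ M : ℝ, ∀ p,
      (∑' k : ℕ, ENNReal.ofReal ((2 : ℝ) ^ ((k : ℝ) * α) *
        ‖∑ j ∈ Finset.Ioc (n k) (n (k + 1)), a p j • e j‖)) ≤ ENNReal.ofReal M) :
    ∃ φ : ℕ → ℕ, StrictMono φ ∧
      ∃ l : E, Filter.Tendsto (fun r => x (φ r)) Filter.atTop (𝓝 l) := by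
  obtain ⟨M, hM⟩ := hbdd
  set c : ℕ → ℝ := fun k => max M 0 * ((2 : ℝ) ^ α)⁻¹ ^ k
  have hc : Summable c := (summable_geometric_of_lt_one (by positivity)
    (inv_lt_one_of_one_lt₀ (Real.one_lt_rpow one_lt_two hα))).mul_left _
  set V : ℕ → Submodule ℝ E := fun k => Submodule.span ℝ (e '' Set.Ioc (n k) (n (k + 1)))
  have hV : ∀ k, FiniteDimensional ℝ (V k) := fun k =>
    FiniteDimensional.span_of_finite ℝ ((Set.finite_Ioc _ _).image e)
  set B : ℕ → Set E := fun k => (V k : Set E) ∩ Metric.closedBall 0 (c k)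
  have hblock : ∀ p k, ∑ j ∈ Finset.Ioc (n k) (n (k + 1)), a p j • e j ∈ B k := fun p k =>
    ⟨Submodule.sum_mem _ fun j hj => Submodule.smul_mem _ _
        (Submodule.subset_span ⟨j, Finset.mem_Ioc.mp hj, rfl⟩),
      mem_closedBall_zero_iff.mpr
        (norm_le_mul_inv_rpow_pow k (le_max_zero_of_tsum_ofReal_le (hM p) k))⟩
  have hK := isCompact_image_tsum_univ_pi (fun k => (V k).isCompact_inter_closedBall (c k)) hc
    fun k v hv => mem_closedBall_zero_iff.mp hv.2
  obtain ⟨l, -, φ, hφ, hlim⟩ :=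
    hK.tendsto_subseq fun p => ⟨_, fun k _ => hblock p k, (hrep p).tsum_eq⟩
  exact ⟨φ, hφ, l, hlim⟩

/-- **Compactness of the embedding `Ẽ ↪ E`.** Under the block-decomposition setup, every
sequence `(x_p)` of elements of `Ẽ` (each given by a block expansion
`x_p = Σ_k Q_k x_p` with `Q_k x_p = Σ_{j=n_k+1}^{n_{k+1}} a_p(j) eⱼ`) with
`sup_p ‖x_p‖ᵢ < ∞` admits a subsequence converging in the norm of `E`. -/
theorem embedding_intermediate_into_E_compact
    {E : Type*} [NormedAddCommGroup E] [NormedSpace ℝ E] [CompleteSpace E]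
    [TopologicalSpace.SeparableSpace E] [MeasurableSpace E] [BorelSpace E]
    -- E is infinite dimensional
    (hEinf : ¬ FiniteDimensional ℝ E)
    -- μ is a centered Gaussian probability measure on E
    (μ : Measure E) [IsProbabilityMeasure μ]
    (hμ : ∀ ξ : E →L[ℝ] ℝ, ∃ v : ℝ≥0, μ.map ξ = gaussianReal 0 v)
    -- X is an E-valued random variable with law μ
    {Ω : Type*} [MeasurableSpace Ω] (P : Measure Ω) [IsProbabilityMeasure P]
    (X : Ω → E) (hXm : Measurable X) (hXlaw : P.map X = μ)
    -- (gₙ) is an orthonormal basis of E'_μ: an i.i.d. sequence of N(0,1) random variables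
    (g : ℕ → Ω → ℝ) (hgm : ∀ j, Measurable (g j))
    (hglaw : ∀ j, P.map (g j) = gaussianReal 0 1)
    (hgindep : iIndepFun g P)
    -- eₙ = E[X gₙ(X)] is the corresponding orthonormal system of the RKHS H
    (e : ℕ → E) (he : ∀ j, e j = ∫ ω, g j ω • X ω ∂P)
    -- the partial sums Xₙ = Σ_{j=1}^n gⱼ eⱼ converge a.s. and in L² to X
    (hae : ∀ᵐ ω ∂P, Filter.Tendsto (fun m => ∑ j ∈ Finset.Ioc 0 m, g j ω • e j)
      Filter.atTop (𝓝 (X ω)))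
    (hL2 : Filter.Tendsto (fun m => ∫ ω, ‖X ω - ∑ j ∈ Finset.Ioc 0 m, g j ω • e j‖ ^ 2 ∂P)
      Filter.atTop (𝓝 0))
    -- α > 0, and an increasing sequence (nₖ) with n₀ = 0 satisfying the tail bound
    (α : ℝ) (hα : 0 < α) (n : ℕ → ℕ) (hn : StrictMono n) (hn0 : n 0 = 0)
    (htail : ∀ k : ℕ, ∫ ω, ‖X ω - ∑ j ∈ Finset.Ioc 0 (n k), g j ω • e j‖ ^ 2 ∂P
      ≤ (2 : ℝ) ^ (-(k : ℝ) * (3 + 2 * α)))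
    (a : ℕ → ℕ → ℝ) (x : ℕ → E)
    (hrep : ∀ p, HasSum
      (fun k : ℕ => ∑ j ∈ Finset.Ioc (n k) (n (k + 1)), a p j • e j) (x p))
    (hbdd : ∃ M : ℝ, ∀ p,
      (∑' k : ℕ, ENNReal.ofReal ((2 : ℝ) ^ ((k : ℝ) * α) *
        ‖∑ j ∈ Finset.Ioc (n k) (n (k + 1)), a p j • e j‖)) ≤ ENNReal.ofReal M) :
    ∃ φ : ℕ → ℕ, StrictMono φ ∧
      ∃ l : E, Filter.Tendsto (fun r => x (φ r)) Filter.atTop (𝓝 l) :=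
  embedding_intermediate_into_E_compact_general e α hα n a x hrep hbdd
end

section
/- Under the sup-norm block-decomposition setup, every sequence (x_p) with sup_p ‖x_p‖' < ∞ (where ‖x‖' = sup_{k>0} 2^{kα} ‖Q_k x‖_E) admits a subsequence that converges in the norm of E; i.e. the embedding of the completion Ẽ' of H under ‖·‖' into E is compact. -/
open MeasureTheory ProbabilityTheory Filter Topology NNReal ENNReal
open Metric Bornology Finset

/-!
Each block `Q_k x_p` lies in the finite-dimensional span of `e_{n_k+1}, …, e_{n_{k+1}}` and has
norm at most `M 2^{-kα}`. The truncations `Σ_{k<K} Q_k x_p` therefore form a bounded subset of a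
finite-dimensional subspace, hence a totally bounded set, and they approximate `x_p` up to a
geometric tail `O(2^{-Kα})` uniformly in `p`. So `{x_p}` is totally bounded, and since `E` is
complete it has a convergent subsequence.
-/

theorem totallyBounded_of_forall_exists_totallyBounded_near {α : Type*} [PseudoMetricSpace α]
    {s : Set α}
    (h : ∀ ε > 0, ∃ t : Set α, TotallyBounded t ∧ ∀ x ∈ s, ∃ y ∈ t, dist x y < ε) :
    TotallyBounded s := by
  refine Metric.totallyBounded_iff.2 fun ε hε => ?_
  obtain ⟨t, ht, hst⟩ := h (ε / 2) (half_pos hε)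
  obtain ⟨u, hu, htu⟩ := Metric.totallyBounded_iff.1 ht (ε / 2) (half_pos hε)
  refine ⟨u, hu, fun x hx => ?_⟩
  obtain ⟨y, hyt, hxy⟩ := hst x hx
  obtain ⟨z, hzu, hyz⟩ := Set.mem_iUnion₂.1 (htu hyt)
  refine Set.mem_iUnion₂.2 ⟨z, hzu, ?_⟩
  calc dist x z ≤ dist x y + dist y z := dist_triangle x y z
    _ < ε / 2 + ε / 2 := add_lt_add hxy hyz
    _ = ε := add_halves ε

theorem TotallyBounded.exists_strictMono_tendsto {α : Type*} [PseudoMetricSpace α]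
    [CompleteSpace α] {x : ℕ → α} (hx : TotallyBounded (Set.range x)) :
    ∃ φ : ℕ → ℕ, StrictMono φ ∧ ∃ l, Tendsto (x ∘ φ) atTop (𝓝 l) := by
  obtain ⟨l, -, φ, hφ, hlim⟩ := (hx.closure.isCompact_of_isClosed isClosed_closure).tendsto_subseq
    fun p => subset_closure (Set.mem_range_self p)
  exact ⟨φ, hφ, l, hlim⟩

theorem Submodule.totallyBounded_of_isBounded_of_subset {𝕜 E : Type*} [NontriviallyNormedField 𝕜]
    [ProperSpace 𝕜] [NormedAddCommGroup E] [NormedSpace 𝕜 E] (S : Submodule 𝕜 E)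
    [FiniteDimensional 𝕜 S] {s : Set E} (hs : IsBounded s) (hsS : s ⊆ S) :
    TotallyBounded s := by
  have := FiniteDimensional.proper 𝕜 S
  have hpre : IsBounded (((↑) : S → E) ⁻¹' s) :=
    isometry_subtype_coe.antilipschitz.isBounded_preimage hs
  rw [← Set.image_preimage_eq_of_subset (f := ((↑) : S → E)) (s := s) (by simpa using hsS),
    totallyBounded_image_iff isometry_subtype_coe.isUniformInducing]
  exact hpre.isCompact_closure.totallyBounded.subset subset_closure

theorem totallyBounded_range_of_hasSum_of_geometric_bound {𝕜 E ι : Type*}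
    [NontriviallyNormedField 𝕜] [ProperSpace 𝕜] [NormedAddCommGroup E] [NormedSpace 𝕜 E]
    (V : ℕ → Submodule 𝕜 E) [∀ k, FiniteDimensional 𝕜 (V k)] {f : ι → ℕ → E} {x : ι → E}
    {C r : ℝ} (hr₀ : 0 ≤ r) (hr : r < 1) (hfV : ∀ i k, f i k ∈ V k)
    (hf : ∀ i k, ‖f i k‖ ≤ C * r ^ k) (hx : ∀ i, HasSum (f i) (x i)) :
    TotallyBounded (Set.range x) := by
  refine totallyBounded_of_forall_exists_totallyBounded_near fun ε hε => ?_
  have htail : Tendsto (fun K : ℕ => C * r ^ K / (1 - r)) atTop (𝓝 0) := by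
    simpa using ((tendsto_pow_atTop_nhds_zero_of_lt_one hr₀ hr).const_mul C).div_const (1 - r)
  obtain ⟨K, hK⟩ := (htail.eventually (gt_mem_nhds hε)).exists
  refine ⟨Set.range fun i => ∑ k ∈ range K, f i k, ?_, ?_⟩
  · refine ((range K).sup V).totallyBounded_of_isBounded_of_subset ?_ ?_
    · refine isBounded_iff_forall_norm_le.2 ⟨∑ k ∈ range K, C * r ^ k, ?_⟩
      rintro _ ⟨i, rfl⟩
      exact (norm_sum_le _ _).trans (sum_le_sum fun k _ => hf i k)
    · rintro _ ⟨i, rfl⟩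
      exact Submodule.sum_mem _ fun k hk => le_sup (f := V) hk (hfV i k)
  · rintro _ ⟨i, rfl⟩
    refine ⟨_, ⟨i, rfl⟩, ?_⟩
    rw [dist_comm, dist_eq_norm]
    exact (norm_sub_le_of_geometric_bound_of_hasSum hr (hf i) (hx i) K).trans_lt hK

theorem embedding_sup_norm_space_into_E_compact_general
    {E : Type*} [NormedAddCommGroup E] [NormedSpace ℝ E] [CompleteSpace E]
    -- eₙ = E[X gₙ(X)] is the corresponding orthonormal system of the RKHS H
    (e : ℕ → E)
    -- α > 0, and an increasing sequence (nₖ) with n₀ = 0 satisfying the tail bound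
    (α : ℝ) (hα : 0 < α) (n : ℕ → ℕ)
    (a : ℕ → ℕ → ℝ) (x : ℕ → E)
    (hrep : ∀ p, HasSum
      (fun k : ℕ => ∑ j ∈ Finset.Ioc (n k) (n (k + 1)), a p j • e j) (x p))
    (hbdd : ∃ M : ℝ, ∀ p, ∀ k : ℕ,
      (2 : ℝ) ^ ((k : ℝ) * α) *
        ‖∑ j ∈ Finset.Ioc (n k) (n (k + 1)), a p j • e j‖ ≤ M) :
    ∃ φ : ℕ → ℕ, StrictMono φ ∧
      ∃ l : E, Filter.Tendsto (fun r => x (φ r)) Filter.atTop (𝓝 l) := by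
  classical
  obtain ⟨M, hM⟩ := hbdd
  have h2α : 1 < (2 : ℝ) ^ α := Real.one_lt_rpow one_lt_two hα
  have hblock : ∀ p k, ‖∑ j ∈ Ioc (n k) (n (k + 1)), a p j • e j‖ ≤ M * ((2 : ℝ) ^ α)⁻¹ ^ k := by
    intro p k
    have hpk := hM p k
    rw [mul_comm (k : ℝ), Real.rpow_mul_natCast zero_le_two] at hpk
    rwa [inv_pow, ← div_eq_mul_inv, le_div_iff₀' (by positivity)]
  have hspan : ∀ p k, ∑ j ∈ Ioc (n k) (n (k + 1)), a p j • e j ∈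
      Submodule.span ℝ (((Ioc (n k) (n (k + 1))).image e : Finset E) : Set E) := fun p k =>
    Submodule.sum_smul_mem _ _ fun j hj => Submodule.subset_span (mem_image_of_mem e hj)
  exact (totallyBounded_range_of_hasSum_of_geometric_bound (𝕜 := ℝ) _ (by positivity)
    (inv_lt_one_of_one_lt₀ h2α) hspan hblock hrep).exists_strictMono_tendsto

/-- **Compactness of the embedding `Ẽ' ↪ E`.** Under the sup-norm block-decomposition setup,
every sequence `(x_p)` given by block expansions `x_p = Σ_k Q_k x_p`
(with `Q_k x_p = Σ_{j=n_k+1}^{n_{k+1}} a_p(j) eⱼ`) such that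
`sup_p ‖x_p‖' = sup_p sup_k 2^{kα} ‖Q_k x_p‖_E < ∞` admits a subsequence converging in the
norm of `E`. -/
theorem embedding_sup_norm_space_into_E_compact
    {E : Type*} [NormedAddCommGroup E] [NormedSpace ℝ E] [CompleteSpace E]
    [TopologicalSpace.SeparableSpace E] [MeasurableSpace E] [BorelSpace E]
    -- E is infinite dimensional
    (hEinf : ¬ FiniteDimensional ℝ E)
    -- μ is a centered Gaussian probability measure on E
    (μ : Measure E) [IsProbabilityMeasure μ]
    (hμ : ∀ ξ : E →L[ℝ] ℝ, ∃ v : ℝ≥0, μ.map ξ = gaussianReal 0 v)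
    -- X is an E-valued random variable with law μ
    {Ω : Type*} [MeasurableSpace Ω] (P : Measure Ω) [IsProbabilityMeasure P]
    (X : Ω → E) (hXm : Measurable X) (hXlaw : P.map X = μ)
    -- (gₙ) is an orthonormal basis of E'_μ: an i.i.d. sequence of N(0,1) random variables
    (g : ℕ → Ω → ℝ) (hgm : ∀ j, Measurable (g j))
    (hglaw : ∀ j, P.map (g j) = gaussianReal 0 1)
    (hgindep : iIndepFun g P)
    -- eₙ = E[X gₙ(X)] is the corresponding orthonormal system of the RKHS H
    (e : ℕ → E) (he : ∀ j, e j = ∫ ω, g j ω • X ω ∂P)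
    -- the partial sums Xₙ = Σ_{j=1}^n gⱼ eⱼ converge a.s. and in L² to X
    (hae : ∀ᵐ ω ∂P, Filter.Tendsto (fun m => ∑ j ∈ Finset.Ioc 0 m, g j ω • e j)
      Filter.atTop (𝓝 (X ω)))
    (hL2 : Filter.Tendsto (fun m => ∫ ω, ‖X ω - ∑ j ∈ Finset.Ioc 0 m, g j ω • e j‖ ^ 2 ∂P)
      Filter.atTop (𝓝 0))
    -- α > 0, and an increasing sequence (nₖ) with n₀ = 0 satisfying the tail bound
    (α : ℝ) (hα : 0 < α) (η : ℝ) (hη : 0 < η) (n : ℕ → ℕ) (hn : StrictMono n) (hn0 : n 0 = 0)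
    (htail : ∀ k : ℕ, ∫ ω, ‖X ω - ∑ j ∈ Finset.Ioc 0 (n k), g j ω • e j‖ ^ 2 ∂P
      ≤ (2 : ℝ) ^ (-(2 * (k : ℝ)) * (α + η)))
    (a : ℕ → ℕ → ℝ) (x : ℕ → E)
    (hrep : ∀ p, HasSum
      (fun k : ℕ => ∑ j ∈ Finset.Ioc (n k) (n (k + 1)), a p j • e j) (x p))
    (hbdd : ∃ M : ℝ, ∀ p, ∀ k : ℕ,
      (2 : ℝ) ^ ((k : ℝ) * α) *
        ‖∑ j ∈ Finset.Ioc (n k) (n (k + 1)), a p j • e j‖ ≤ M) :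
    ∃ φ : ℕ → ℕ, StrictMono φ ∧
      ∃ l : E, Filter.Tendsto (fun r => x (φ r)) Filter.atTop (𝓝 l) :=
  embedding_sup_norm_space_into_E_compact_general e α hα n a x hrep hbdd
end

section
/- Let E = C₀([0,T],ℝ) with the sup norm and H = H¹₀([0,T]) the Cameron–Martin space. For 0 < θ < α (with α < 1), the small α-Hölder space C⁰_α is contained in the interpolation space G_θ; moreover C⁰_α is contained in the closure of H in G_θ with respect to the norm ‖·‖_θ. -/
open MeasureTheory Filter Topology

/-- `γ ∈ H¹₀([0,T])`, with the derivative `f` as witness: `γ` is the primitive on `[0,T]` of a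
square-integrable function `f`. -/
def memH10 (T : ℝ) (γ : ℝ → ℝ) : Prop :=
  ∃ f : ℝ → ℝ, IntegrableOn f (Set.Icc 0 T) ∧
    IntegrableOn (fun s => f s ^ 2) (Set.Icc 0 T) ∧
    ∀ s ∈ Set.Icc (0 : ℝ) T, γ s = ∫ u in (0 : ℝ)..s, f u

/-- The interpolation `K`-functional
`K(t,x) = inf {‖a‖_∞ + t |b|_H : x = a + b, a ∈ C₀([0,T]), b ∈ H¹₀([0,T])}`. -/
noncomputable def Kfunctional (T t : ℝ) (x : ℝ → ℝ) : ℝ :=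
  sInf {r : ℝ | ∃ (a f : ℝ → ℝ),
    ContinuousOn a (Set.Icc 0 T) ∧ a 0 = 0 ∧
    IntegrableOn f (Set.Icc 0 T) ∧ IntegrableOn (fun s => f s ^ 2) (Set.Icc 0 T) ∧
    (∀ s ∈ Set.Icc (0 : ℝ) T, x s = a s + ∫ u in (0 : ℝ)..s, f u) ∧
    r = (⨆ s : Set.Icc (0 : ℝ) T, |a s|) +
      t * Real.sqrt (∫ s in Set.Icc (0 : ℝ) T, f s ^ 2)}

/-- `x` belongs to the interpolation space `G_θ`, i.e. `‖x‖_θ = sup_{t>0} t^{-θ} K(t,x) < ∞`. -/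
def memGtheta (T θ : ℝ) (x : ℝ → ℝ) : Prop :=
  ∃ M : ℝ, ∀ t : ℝ, 0 < t → t ^ (-θ) * Kfunctional T t x ≤ M

/-- `γ` belongs to the small `α`-Hölder space `C⁰_α`: `γ` is a continuous path on `[0,T]`
vanishing at `0`, `α`-Hölder continuous, and its modulus of continuity
`ω(δ) = sup_{|t-s| ≤ δ} |γ(t) - γ(s)|` satisfies `ω(δ)/δ^α → 0` as `δ → 0+`. -/
def memSmallHolder (T α : ℝ) (γ : ℝ → ℝ) : Prop :=
  ContinuousOn γ (Set.Icc 0 T) ∧ γ 0 = 0 ∧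
  (∃ C : ℝ, ∀ s ∈ Set.Icc (0 : ℝ) T, ∀ t ∈ Set.Icc (0 : ℝ) T,
    |γ t - γ s| ≤ C * |t - s| ^ α) ∧
  ∀ ε : ℝ, 0 < ε → ∃ δ₀ : ℝ, 0 < δ₀ ∧ ∀ δ : ℝ, 0 < δ → δ ≤ δ₀ →
    ∀ s ∈ Set.Icc (0 : ℝ) T, ∀ t ∈ Set.Icc (0 : ℝ) T, |t - s| ≤ δ →
      |γ t - γ s| ≤ ε * δ ^ α

namespace SmallHolderAux

/-- Clamp a real number into `[0, T]`. -/
def clamp (T u : ℝ) : ℝ := max (min u T) 0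

lemma clamp_mem {T : ℝ} (hT : 0 ≤ T) (u : ℝ) : clamp T u ∈ Set.Icc (0 : ℝ) T := by
  constructor
  · exact le_max_right _ _
  · exact max_le (min_le_right _ _) hT

lemma clamp_eq {T u : ℝ} (hu : u ∈ Set.Icc (0 : ℝ) T) : clamp T u = u := by
  rw [clamp, min_eq_left hu.2, max_eq_left hu.1]

lemma clamp_nonpos {T u : ℝ} (hT : 0 ≤ T) (hu : u ≤ 0) : clamp T u = 0 := by
  rw [clamp, min_eq_left (hu.trans hT), max_eq_right hu]

lemma clamp_lip (T u v : ℝ) : |clamp T u - clamp T v| ≤ |u - v| := by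
  refine (abs_max_sub_max_le_abs _ _ _).trans ?_
  refine (abs_min_sub_min_le_max u T v T).trans ?_
  simp

lemma clamp_continuous (T : ℝ) : Continuous (clamp T) := by
  unfold clamp; fun_prop

section Tilde

variable {T : ℝ} {γ : ℝ → ℝ}

/-- Extension of `γ` to all of `ℝ` by clamping. -/
noncomputable def tilde (T : ℝ) (γ : ℝ → ℝ) (u : ℝ) : ℝ := γ (clamp T u)

lemma tilde_continuous (hT : 0 ≤ T) (hc : ContinuousOn γ (Set.Icc 0 T)) :
    Continuous (tilde T γ) :=
  hc.comp_continuous (clamp_continuous T) (clamp_mem hT)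

lemma tilde_eq (hu : u ∈ Set.Icc (0 : ℝ) T) : tilde T γ u = γ u := by
  rw [tilde, clamp_eq hu]

/-- The smoothing kernel: difference quotient at scale `δ`. -/
noncomputable def fdel (T : ℝ) (γ : ℝ → ℝ) (δ u : ℝ) : ℝ :=
  (tilde T γ u - tilde T γ (u - δ)) / δ

/-- The smoothed path: primitive of `fdel`. -/
noncomputable def bdel (T : ℝ) (γ : ℝ → ℝ) (δ s : ℝ) : ℝ :=
  ∫ u in (0 : ℝ)..s, fdel T γ δ u

lemma fdel_continuous (hT : 0 ≤ T) (hc : ContinuousOn γ (Set.Icc 0 T)) (δ : ℝ) :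
    Continuous (fdel T γ δ) := by
  have h := tilde_continuous hT hc
  exact ((h.sub (h.comp (continuous_id.sub continuous_const))).div_const δ)

lemma bdel_continuous (hT : 0 ≤ T) (hc : ContinuousOn γ (Set.Icc 0 T)) (δ : ℝ) :
    Continuous (bdel T γ δ) :=
  intervalIntegral.continuous_primitive
    (fun a b => ((fdel_continuous hT hc δ)).intervalIntegrable a b) 0

/-- The primitive of the difference quotient is the sliding average. -/
lemma integral_fdel (hT : 0 ≤ T) (hc : ContinuousOn γ (Set.Icc 0 T)) (h0 : γ 0 = 0)
    {δ : ℝ} (hδ : 0 < δ) (s : ℝ) :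
    ∫ u in (0 : ℝ)..s, fdel T γ δ u = (∫ u in (s - δ)..s, tilde T γ u) / δ := by
  have hcont := tilde_continuous hT hc
  have hint : ∀ a b : ℝ, IntervalIntegrable (tilde T γ) volume a b :=
    fun a b => hcont.intervalIntegrable a b
  have h1 : ∫ u in (0 : ℝ)..s, fdel T γ δ u =
      (∫ u in (0 : ℝ)..s, (tilde T γ u - tilde T γ (u - δ))) / δ := by
    simp only [fdel, intervalIntegral.integral_div]
  rw [h1]
  congr 1
  have h2 : (∫ u in (0 : ℝ)..s, tilde T γ (u - δ)) = ∫ u in (0 - δ)..(s - δ), tilde T γ u :=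
    intervalIntegral.integral_comp_sub_right _ δ
  have hzero : (∫ u in (-δ)..(0 : ℝ), tilde T γ u) = 0 := by
    have : Set.EqOn (tilde T γ) 0 (Set.uIcc (-δ) 0) := by
      intro u hu
      have hu0 : u ≤ 0 := by
        rcases Set.mem_uIcc.1 hu with h | h
        · exact h.2
        · linarith [h.2, hδ.le]
      simp [tilde, clamp_nonpos hT hu0, h0, Pi.zero_apply]
    rw [intervalIntegral.integral_congr this]
    simp
  have hadd1 : (∫ u in (-δ)..(s - δ), tilde T γ u) + ∫ u in (s - δ)..s, tilde T γ u =
      ∫ u in (-δ)..s, tilde T γ u :=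
    intervalIntegral.integral_add_adjacent_intervals (hint _ _) (hint _ _)
  have hadd2 : (∫ u in (-δ)..(0 : ℝ), tilde T γ u) + ∫ u in (0 : ℝ)..s, tilde T γ u =
      ∫ u in (-δ)..s, tilde T γ u :=
    intervalIntegral.integral_add_adjacent_intervals (hint _ _) (hint _ _)
  have hint' : IntervalIntegrable (fun u => tilde T γ (u - δ)) volume 0 s :=
    Continuous.intervalIntegrable (by fun_prop) _ _
  rw [intervalIntegral.integral_sub (hint _ _) hint', h2]
  have : (0 : ℝ) - δ = -δ := by ring
  rw [this]
  linarith


lemma abound (hT : 0 ≤ T) (hc : ContinuousOn γ (Set.Icc 0 T)) (h0 : γ 0 = 0)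
    {δ α D : ℝ} (hδ : 0 < δ)
    (hP : ∀ u v : ℝ, |u - v| ≤ δ → |tilde T γ u - tilde T γ v| ≤ D * δ ^ α)
    {s : ℝ} (hs : s ∈ Set.Icc (0 : ℝ) T) :
    |γ s - bdel T γ δ s| ≤ D * δ ^ α := by
  rw [bdel, integral_fdel hT hc h0 hδ]
  have hcont := tilde_continuous hT hc
  have hγs : γ s = tilde T γ s := (tilde_eq hs).symm
  have key : γ s - (∫ u in (s - δ)..s, tilde T γ u) / δ =
      (∫ u in (s - δ)..s, (tilde T γ s - tilde T γ u)) / δ := by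
    rw [intervalIntegral.integral_sub intervalIntegrable_const (hcont.intervalIntegrable _ _),
      intervalIntegral.integral_const, hγs, smul_eq_mul]
    field_simp
    ring
  rw [key, abs_div, abs_of_pos hδ, div_le_iff₀ hδ]
  have hb : ∀ u ∈ Set.uIoc (s - δ) s, ‖tilde T γ s - tilde T γ u‖ ≤ D * δ ^ α := by
    intro u hu
    rw [Set.uIoc_of_le (by linarith)] at hu
    exact hP s u (abs_le.2 ⟨by linarith [hu.2], by linarith [hu.1]⟩)
  have := intervalIntegral.norm_integral_le_of_norm_le_const hb
  calc |∫ u in (s - δ)..s, (tilde T γ s - tilde T γ u)|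
      ≤ D * δ ^ α * |s - (s - δ)| := this
    _ = D * δ ^ α * δ := by rw [show s - (s - δ) = δ by ring, abs_of_pos hδ]

lemma fdel_bound {δ α D : ℝ} (hδ : 0 < δ)
    (hP : ∀ u v : ℝ, |u - v| ≤ δ → |tilde T γ u - tilde T γ v| ≤ D * δ ^ α)
    (u : ℝ) : |fdel T γ δ u| ≤ D * δ ^ α / δ := by
  rw [fdel, abs_div, abs_of_pos hδ]
  have h : |u - (u - δ)| ≤ δ := by
    rw [show u - (u - δ) = δ by ring, abs_of_pos hδ]
  gcongr
  exact hP u (u - δ) h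

lemma Kfunctional_le {T t : ℝ} (ht : 0 ≤ t) (x a f : ℝ → ℝ)
    (ha : ContinuousOn a (Set.Icc 0 T)) (ha0 : a 0 = 0)
    (hf : IntegrableOn f (Set.Icc 0 T))
    (hf2 : IntegrableOn (fun s => f s ^ 2) (Set.Icc 0 T))
    (hx : ∀ s ∈ Set.Icc (0 : ℝ) T, x s = a s + ∫ u in (0 : ℝ)..s, f u) :
    Kfunctional T t x ≤ (⨆ s : Set.Icc (0 : ℝ) T, |a s|) +
      t * Real.sqrt (∫ s in Set.Icc (0 : ℝ) T, f s ^ 2) := by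
  apply csInf_le
  · refine ⟨0, fun r hr => ?_⟩
    obtain ⟨a', f', _, _, _, _, _, hr⟩ := hr
    rw [hr]
    exact add_nonneg (Real.iSup_nonneg fun s => abs_nonneg _)
      (mul_nonneg ht (Real.sqrt_nonneg _))
  · exact ⟨a, f, ha, ha0, hf, hf2, hx, rfl⟩

lemma Kfunctional_le_of_bounds {T t : ℝ} (hT : 0 ≤ T) (ht : 0 ≤ t) (x a f : ℝ → ℝ)
    {A B : ℝ} (hB : 0 ≤ B)
    (ha : ContinuousOn a (Set.Icc 0 T)) (ha0 : a 0 = 0)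
    (hf : IntegrableOn f (Set.Icc 0 T))
    (hf2 : IntegrableOn (fun s => f s ^ 2) (Set.Icc 0 T))
    (hx : ∀ s ∈ Set.Icc (0 : ℝ) T, x s = a s + ∫ u in (0 : ℝ)..s, f u)
    (haA : ∀ s ∈ Set.Icc (0 : ℝ) T, |a s| ≤ A)
    (hfB : ∀ s ∈ Set.Icc (0 : ℝ) T, |f s| ≤ B) :
    Kfunctional T t x ≤ A + t * (B * Real.sqrt T) := by
  refine (Kfunctional_le ht x a f ha ha0 hf hf2 hx).trans (add_le_add ?_ ?_)
  · haveI : Nonempty (Set.Icc (0 : ℝ) T) := (Set.nonempty_Icc.2 hT).to_subtype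
    exact ciSup_le fun s => haA s s.2
  · refine mul_le_mul_of_nonneg_left ?_ ht
    have hle : (∫ s in Set.Icc (0 : ℝ) T, f s ^ 2) ≤ B ^ 2 * T := by
      have h1 : (∫ s in Set.Icc (0 : ℝ) T, f s ^ 2) ≤
          ∫ _ in Set.Icc (0 : ℝ) T, B ^ 2 := by
        refine setIntegral_mono_on hf2 ?_ measurableSet_Icc fun s hs => ?_
        · exact integrableOn_const (by
            rw [Real.volume_Icc]; exact ENNReal.ofReal_ne_top)
        · have := hfB s hs
          nlinarith [abs_nonneg (f s), sq_abs (f s)]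
      have h2 : (∫ _ in Set.Icc (0 : ℝ) T, B ^ 2) = B ^ 2 * T := by
        rw [setIntegral_const, Real.volume_real_Icc_of_le hT, sub_zero,
          smul_eq_mul, mul_comm]
      linarith
    calc Real.sqrt (∫ s in Set.Icc (0 : ℝ) T, f s ^ 2) ≤ Real.sqrt (B ^ 2 * T) :=
          Real.sqrt_le_sqrt hle
      _ = B * Real.sqrt T := by
          rw [Real.sqrt_mul (sq_nonneg B), Real.sqrt_sq hB]


lemma K_le_triv {T t : ℝ} (hT : 0 ≤ T) (ht : 0 ≤ t) (x : ℝ → ℝ) {A : ℝ}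
    (hc : ContinuousOn x (Set.Icc 0 T)) (hx0 : x 0 = 0)
    (hA : ∀ s ∈ Set.Icc (0 : ℝ) T, |x s| ≤ A) :
    Kfunctional T t x ≤ A := by
  have h := Kfunctional_le_of_bounds hT ht x x (fun _ => (0 : ℝ)) le_rfl hc hx0
    (integrableOn_const measure_Icc_lt_top.ne)
    (by simpa using (integrableOn_const :
      IntegrableOn (fun _ => (0:ℝ)) (Set.Icc 0 T)))
    (fun s _ => by simp) hA (fun s _ => by simp)
  simpa using h

lemma K_le_main {T t : ℝ} {γ : ℝ → ℝ} (hT : 0 ≤ T) (ht : 0 ≤ t)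
    (hc : ContinuousOn γ (Set.Icc 0 T)) (h0 : γ 0 = 0)
    {δ α D : ℝ} (hδ : 0 < δ) (hD : 0 ≤ D)
    (hP : ∀ u v : ℝ, |u - v| ≤ δ → |tilde T γ u - tilde T γ v| ≤ D * δ ^ α) :
    Kfunctional T t γ ≤ D * δ ^ α + t * (D * δ ^ α / δ * Real.sqrt T) := by
  have hfc := fdel_continuous hT hc δ
  exact Kfunctional_le_of_bounds hT ht γ (fun s => γ s - bdel T γ δ s) (fdel T γ δ)
    (by positivity)
    (hc.sub (bdel_continuous hT hc δ).continuousOn)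
    (by simp [bdel, intervalIntegral.integral_same, h0])
    hfc.integrableOn_Icc ((hfc.pow 2).integrableOn_Icc)
    (fun s _ => by simp only [bdel]; ring)
    (fun s hs => abound hT hc h0 hδ hP hs)
    (fun u _ => fdel_bound hδ hP u)

lemma K_le_diff {T t : ℝ} {γ : ℝ → ℝ} (hT : 0 ≤ T) (ht : 0 ≤ t)
    (hc : ContinuousOn γ (Set.Icc 0 T)) (h0 : γ 0 = 0)
    {δ₁ δ₂ α D : ℝ} (hδ₁ : 0 < δ₁) (hδ₂ : 0 < δ₂) (hD : 0 ≤ D)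
    (hP₁ : ∀ u v : ℝ, |u - v| ≤ δ₁ → |tilde T γ u - tilde T γ v| ≤ D * δ₁ ^ α)
    (hP₂ : ∀ u v : ℝ, |u - v| ≤ δ₂ → |tilde T γ u - tilde T γ v| ≤ D * δ₂ ^ α) :
    Kfunctional T t (fun s => γ s - bdel T γ δ₂ s) ≤
      D * δ₁ ^ α + t * ((D * δ₁ ^ α / δ₁ + D * δ₂ ^ α / δ₂) * Real.sqrt T) := by
  have hfc₁ := fdel_continuous hT hc δ₁
  have hfc₂ := fdel_continuous hT hc δ₂
  have hfc := hfc₁.sub hfc₂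
  refine Kfunctional_le_of_bounds hT ht _ (fun s => γ s - bdel T γ δ₁ s)
    (fun u => fdel T γ δ₁ u - fdel T γ δ₂ u) (by positivity)
    (hc.sub (bdel_continuous hT hc δ₁).continuousOn)
    (by simp [bdel, intervalIntegral.integral_same, h0])
    hfc.integrableOn_Icc ((hfc.pow 2).integrableOn_Icc)
    (fun s _ => ?_) (fun s hs => abound hT hc h0 hδ₁ hP₁ hs)
    (fun u _ => (abs_sub _ _).trans
      (add_le_add (fdel_bound hδ₁ hP₁ u) (fdel_bound hδ₂ hP₂ u)))
  rw [intervalIntegral.integral_sub (hfc₁.intervalIntegrable _ _)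
    (hfc₂.intervalIntegrable _ _)]
  simp only [bdel]
  ring

lemma hP_of_holder {T : ℝ} {γ : ℝ → ℝ} {C α : ℝ} (hT : 0 ≤ T) (hα : 0 ≤ α) (hC0 : 0 ≤ C)
    (hC : ∀ s ∈ Set.Icc (0 : ℝ) T, ∀ r ∈ Set.Icc (0 : ℝ) T, |γ r - γ s| ≤ C * |r - s| ^ α)
    {δ : ℝ} (hδ : 0 < δ) :
    ∀ u v : ℝ, |u - v| ≤ δ → |tilde T γ u - tilde T γ v| ≤ C * δ ^ α := by
  intro u v h
  refine (hC (clamp T v) (clamp_mem hT v) (clamp T u) (clamp_mem hT u)).trans ?_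
  have h1 : |clamp T u - clamp T v| ≤ δ := (clamp_lip T u v).trans h
  exact mul_le_mul_of_nonneg_left
    (Real.rpow_le_rpow (abs_nonneg _) h1 hα) hC0

lemma hP_of_small {T : ℝ} {γ : ℝ → ℝ} {ε α δ : ℝ} (hT : 0 ≤ T)
    (hsm : ∀ s ∈ Set.Icc (0 : ℝ) T, ∀ r ∈ Set.Icc (0 : ℝ) T, |r - s| ≤ δ →
      |γ r - γ s| ≤ ε * δ ^ α) :
    ∀ u v : ℝ, |u - v| ≤ δ → |tilde T γ u - tilde T γ v| ≤ ε * δ ^ α :=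
  fun u v h => hsm (clamp T v) (clamp_mem hT v) (clamp T u) (clamp_mem hT u)
    ((clamp_lip T u v).trans h)

end Tilde

end SmallHolderAux

/-- **Small Hölder paths lie in the interpolation spaces** (Remark 2 of the paper). Let
`E = C₀([0,T],ℝ)` and `H = H¹₀([0,T])`. For `0 < θ < α < 1`, the small `α`-Hölder space
`C⁰_α` is contained in `G_θ`, and even in the closure of `H` in `G_θ` for the norm `‖·‖_θ`. -/
theorem smallHolder_subset_interpolation (T θ α : ℝ) (hT : 0 < T)
    (hθ : 0 < θ) (hθα : θ < α) (hα : α < 1)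
    (γ : ℝ → ℝ) (hγ : memSmallHolder T α γ) :
    memGtheta T θ γ ∧
    ∃ b : ℕ → (ℝ → ℝ), (∀ p, memH10 T (b p)) ∧
      ∀ ε : ℝ, 0 < ε → ∃ p₀ : ℕ, ∀ p ≥ p₀, ∀ t : ℝ, 0 < t →
        t ^ (-θ) * Kfunctional T t (fun s => γ s - b p s) ≤ ε := by
  classical
  obtain ⟨hcont, h0, ⟨C, hC⟩, hsmall⟩ := hγ
  set C₀ := max C 0 with hC₀def
  have hC₀ : 0 ≤ C₀ := le_max_right _ _
  have hα0 : (0 : ℝ) < α := hθ.trans hθα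
  have hC' : ∀ s ∈ Set.Icc (0 : ℝ) T, ∀ r ∈ Set.Icc (0 : ℝ) T,
      |γ r - γ s| ≤ C₀ * |r - s| ^ α := fun s hs r hr =>
    (hC s hs r hr).trans (mul_le_mul_of_nonneg_right (le_max_left _ _)
      (Real.rpow_nonneg (abs_nonneg _) _))
  open SmallHolderAux in
  constructor
  · -- memGtheta
    refine ⟨max (C₀ * T ^ α) (C₀ * (1 + Real.sqrt T)), fun t ht => ?_⟩
    rcases le_or_gt 1 t with h1 | h1
    · -- large t : trivial decomposition
      have hK : Kfunctional T t γ ≤ C₀ * T ^ α := by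
        refine SmallHolderAux.K_le_triv hT.le ht.le γ hcont h0 fun s hs => ?_
        have h := hC' 0 (Set.left_mem_Icc.2 hT.le) s hs
        rw [h0, sub_zero] at h
        refine h.trans (mul_le_mul_of_nonneg_left ?_ hC₀)
        exact Real.rpow_le_rpow (abs_nonneg _)
          (by rw [sub_zero, abs_of_nonneg hs.1]; exact hs.2) hα0.le
      have h2 : t ^ (-θ) ≤ 1 :=
        Real.rpow_le_one_of_one_le_of_nonpos h1 (by linarith)
      calc t ^ (-θ) * Kfunctional T t γ
          ≤ t ^ (-θ) * (C₀ * T ^ α) :=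
            mul_le_mul_of_nonneg_left hK (Real.rpow_nonneg ht.le _)
        _ ≤ 1 * (C₀ * T ^ α) := by
            refine mul_le_mul_of_nonneg_right h2 ?_
            positivity
        _ ≤ max (C₀ * T ^ α) (C₀ * (1 + Real.sqrt T)) := by
            rw [one_mul]; exact le_max_left _ _
    · -- small t : decomposition at scale δ = t
      have hP := SmallHolderAux.hP_of_holder hT.le hα0.le hC₀ hC' ht (δ := t)
      have hK := SmallHolderAux.K_le_main hT.le ht.le hcont h0 ht hC₀ hP
      have e1 : t * (C₀ * t ^ α / t * Real.sqrt T) = C₀ * t ^ α * Real.sqrt T := by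
        field_simp
      have hKK : Kfunctional T t γ ≤ C₀ * t ^ α * (1 + Real.sqrt T) := by
        rw [e1] at hK
        have : C₀ * t ^ α * (1 + Real.sqrt T) = C₀ * t ^ α + C₀ * t ^ α * Real.sqrt T := by
          ring
        rw [this]; exact hK
      have e2 : t ^ (-θ) * t ^ α = t ^ (α - θ) := by
        rw [← Real.rpow_add ht]; congr 1; ring
      have e3 : t ^ (α - θ) ≤ 1 := Real.rpow_le_one ht.le h1.le (by linarith)
      calc t ^ (-θ) * Kfunctional T t γ
          ≤ t ^ (-θ) * (C₀ * t ^ α * (1 + Real.sqrt T)) :=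
            mul_le_mul_of_nonneg_left hKK (Real.rpow_nonneg ht.le _)
        _ = C₀ * (t ^ (-θ) * t ^ α) * (1 + Real.sqrt T) := by ring
        _ = C₀ * t ^ (α - θ) * (1 + Real.sqrt T) := by rw [e2]
        _ ≤ C₀ * 1 * (1 + Real.sqrt T) := by
            have hs : (0:ℝ) ≤ 1 + Real.sqrt T := by positivity
            exact mul_le_mul_of_nonneg_right
              (mul_le_mul_of_nonneg_left e3 hC₀) hs
        _ = C₀ * (1 + Real.sqrt T) := by ring
        _ ≤ max (C₀ * T ^ α) (C₀ * (1 + Real.sqrt T)) := le_max_right _ _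
  · -- closure part
    refine ⟨fun p => SmallHolderAux.bdel T γ (1 / ((p : ℝ) + 1)), fun p => ?_, ?_⟩
    · exact ⟨SmallHolderAux.fdel T γ (1 / ((p : ℝ) + 1)),
        (SmallHolderAux.fdel_continuous hT.le hcont _).integrableOn_Icc,
        ((SmallHolderAux.fdel_continuous hT.le hcont _).pow 2).integrableOn_Icc,
        fun s _ => rfl⟩
    · intro ε hε
      have hsq : (0 : ℝ) < 1 + 2 * Real.sqrt T := by positivity
      set E := ε / (1 + 2 * Real.sqrt T) with hEdef
      have hE : 0 < E := div_pos hε hsq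
      have hEε : E * (1 + 2 * Real.sqrt T) = ε := div_mul_cancel₀ _ hsq.ne'
      obtain ⟨δ₀, hδ₀, hsm⟩ := hsmall E hE
      obtain ⟨p₀, hp₀⟩ := exists_nat_one_div_lt (lt_min hδ₀ one_pos)
      refine ⟨p₀, fun p hp t ht => ?_⟩
      set δ := 1 / ((p : ℝ) + 1) with hδdef
      have hδpos : 0 < δ := by positivity
      have hδle : δ ≤ min δ₀ 1 := by
        refine le_trans ?_ hp₀.le
        rw [hδdef]
        gcongr <;> exact_mod_cast hp
      have hδ₀' : δ ≤ δ₀ := hδle.trans (min_le_left _ _)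
      have hδ1 : δ ≤ 1 := hδle.trans (min_le_right _ _)
      have hPρ : ∀ ρ : ℝ, 0 < ρ → ρ ≤ δ₀ →
          ∀ u v : ℝ, |u - v| ≤ ρ →
            |SmallHolderAux.tilde T γ u - SmallHolderAux.tilde T γ v| ≤ E * ρ ^ α :=
        fun ρ hρ1 hρ2 => SmallHolderAux.hP_of_small hT.le
          (fun s hs r hr h => hsm ρ hρ1 hρ2 s hs r hr h)
      have hPδ := hPρ δ hδpos hδ₀'
      rcases le_or_gt δ t with hcase | hcase
      · -- t ≥ δ : trivial decomposition
        have hK : Kfunctional T t (fun s => γ s - SmallHolderAux.bdel T γ δ s) ≤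
            E * δ ^ α := by
          refine SmallHolderAux.K_le_triv hT.le ht.le _
            (hcont.sub (SmallHolderAux.bdel_continuous hT.le hcont δ).continuousOn)
            (by simp [SmallHolderAux.bdel, intervalIntegral.integral_same, h0])
            fun s hs => SmallHolderAux.abound hT.le hcont h0 hδpos hPδ hs
        have h1 : t ^ (-θ) ≤ δ ^ (-θ) :=
          Real.rpow_le_rpow_of_nonpos hδpos hcase (by linarith)
        have h2 : δ ^ (-θ) * δ ^ α = δ ^ (α - θ) := by
          rw [← Real.rpow_add hδpos]; congr 1; ring
        have h3 : δ ^ (α - θ) ≤ 1 := Real.rpow_le_one hδpos.le hδ1 (by linarith)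
        calc t ^ (-θ) * Kfunctional T t (fun s => γ s - SmallHolderAux.bdel T γ δ s)
            ≤ t ^ (-θ) * (E * δ ^ α) :=
              mul_le_mul_of_nonneg_left hK (Real.rpow_nonneg ht.le _)
          _ ≤ δ ^ (-θ) * (E * δ ^ α) := by
              refine mul_le_mul_of_nonneg_right h1 ?_
              have := Real.rpow_nonneg hδpos.le α
              positivity
          _ = E * (δ ^ (-θ) * δ ^ α) := by ring
          _ = E * δ ^ (α - θ) := by rw [h2]
          _ ≤ E * 1 := mul_le_mul_of_nonneg_left h3 hE.le
          _ ≤ ε := by nlinarith [Real.sqrt_nonneg T]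
      · -- t < δ : decomposition at scale t
        have hPt := hPρ t ht (hcase.le.trans hδ₀')
        have hK := SmallHolderAux.K_le_diff hT.le ht.le hcont h0 ht hδpos hE.le hPt hPδ
        have hP0 : (0:ℝ) ≤ t ^ (-θ) := Real.rpow_nonneg ht.le _
        have f1 : t ^ (-θ) * t ^ α ≤ 1 := by
          rw [← Real.rpow_add ht]
          exact Real.rpow_le_one ht.le (hcase.le.trans hδ1) (by linarith)
        have f2 : t ^ (-θ) * (t * (δ ^ α / δ)) ≤ 1 := by
          have e1 : t ^ (-θ) * t = t ^ (1 - θ) := by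
            rw [show (1:ℝ) - θ = -θ + 1 by ring, Real.rpow_add ht, Real.rpow_one]
          have e2 : t ^ (1 - θ) ≤ δ ^ (1 - θ) :=
            Real.rpow_le_rpow ht.le hcase.le (by linarith)
          have e3 : δ ^ (1 - θ) * (δ ^ α / δ) = δ ^ (α - θ) := by
            rw [div_eq_mul_inv, show (δ:ℝ)⁻¹ = δ ^ (-1:ℝ) by rw [Real.rpow_neg_one],
              ← mul_assoc, ← Real.rpow_add hδpos, ← Real.rpow_add hδpos]
            congr 1; ring
          have e4 : δ ^ (α - θ) ≤ 1 := Real.rpow_le_one hδpos.le hδ1 (by linarith)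
          have hnn : (0:ℝ) ≤ δ ^ α / δ := by
            have := Real.rpow_nonneg hδpos.le α
            positivity
          calc t ^ (-θ) * (t * (δ ^ α / δ)) = (t ^ (-θ) * t) * (δ ^ α / δ) := by ring
            _ = t ^ (1 - θ) * (δ ^ α / δ) := by rw [e1]
            _ ≤ δ ^ (1 - θ) * (δ ^ α / δ) := mul_le_mul_of_nonneg_right e2 hnn
            _ = δ ^ (α - θ) := e3
            _ ≤ 1 := e4
        have e : E * t ^ α + t * ((E * t ^ α / t + E * δ ^ α / δ) * Real.sqrt T) =
            E * t ^ α + (E * (t ^ (-θ))⁻¹ * 0 + (E * t ^ α + E * (t * (δ ^ α / δ)))) *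
              Real.sqrt T := by
          field_simp
          ring
        rw [e] at hK
        have hKK := mul_le_mul_of_nonneg_left hK hP0
        refine hKK.trans ?_
        have hsT : (0:ℝ) ≤ Real.sqrt T := Real.sqrt_nonneg T
        nlinarith [mul_le_mul_of_nonneg_left f1 hE.le,
          mul_le_mul_of_nonneg_left f2 hE.le,
          mul_le_mul_of_nonneg_right (mul_le_mul_of_nonneg_left f1 hE.le) hsT,
          mul_le_mul_of_nonneg_right (mul_le_mul_of_nonneg_left f2 hE.le) hsT]
end
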